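/- arXiv:1412.5358 — 4 statements merged into one kernel-verified Lean document; each statement's English description precedes it below -/
import Mathlib

section
/- Let H be a group admitting no surjective group homomorphism onto ℤ, and let φ be an automorphism of H. Then every automorphism ψ of the mapping torus H_φ = H ⋊_φ ℤ maps the subgroup ι(H) onto itself, i.e. ψ(ι(H)) = ι(H). -/
/-!
The image of `ι(H)` under an automorphism `ψ` is the image of the homomorphism `ψ ∘ ι`, and its
composite with the projection `H_φ → ℤ` is a homomorphism `H → ℤ`. Its image is a subgroup of `ℤ`,
hence trivial or infinite cyclic; the latter would give a surjection `H → ℤ`, so it is trivial and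
`ψ(ι(H)) ≤ ι(H)`, the kernel of the projection. Applying this to `ψ⁻¹` gives the reverse inclusion.
-/

/-- The mapping torus `H ⋊_φ ℤ` of an automorphism `φ` of `H`: the semidirect
product in which the generator `t` of the `ℤ`-factor acts by
`t · ι(h) · t⁻¹ = ι(φ(h))`. -/
abbrev MappingTorus (H : Type*) [Group H] (φ : MulAut H) : Type _ :=
  H ⋊[zpowersHom (MulAut H) φ] Multiplicative ℤ

/-- The canonical inclusion `ι : H → H ⋊_φ ℤ`. -/
abbrev MappingTorus.ι {H : Type*} [Group H] (φ : MulAut H) : H →* MappingTorus H φ :=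
  SemidirectProduct.inl

/-- The canonical generator `t` of the `ℤ`-factor of `H ⋊_φ ℤ`. -/
abbrev MappingTorus.t {H : Type*} [Group H] (φ : MulAut H) : MappingTorus H φ :=
  SemidirectProduct.inr (Multiplicative.ofAdd 1)

theorem Subgroup.infinite_of_ne_bot {G : Type*} [Group G] [IsMulTorsionFree G] {K : Subgroup G}
    (hK : K ≠ ⊥) : Infinite K := by
  obtain ⟨g, hg⟩ := (Subgroup.ne_bot_iff_exists_ne_one).mp hK
  by_contra hfin
  rw [not_infinite_iff_finite] at hfin
  exact hg ((isOfFinOrder_iff_eq_one g).mp (isOfFinOrder_of_finite g))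

theorem MonoidHom.eq_one_of_forall_not_surjective_int {H : Type*} [Group H]
    (hH : ∀ f : H →* Multiplicative ℤ, ¬ Function.Surjective f) (f : H →* Multiplicative ℤ) :
    f = 1 := by
  rw [← MonoidHom.range_eq_bot_iff]
  by_contra hf
  have := Subgroup.infinite_of_ne_bot hf
  exact hH ((intCyclicMulEquiv (G := f.range)).symm.toMonoidHom.comp f.rangeRestrict)
    (intCyclicMulEquiv.symm.surjective.comp f.rangeRestrict_surjective)

theorem SemidirectProduct.range_le_range_inl_of_forall_not_surjective_int {H N : Type*} [Group H]
    [Group N] {ρ : Multiplicative ℤ →* MulAut N}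
    (hH : ∀ f : H →* Multiplicative ℤ, ¬ Function.Surjective f) (f : H →* N ⋊[ρ] Multiplicative ℤ) :
    f.range ≤ (inl : N →* N ⋊[ρ] Multiplicative ℤ).range := by
  rw [range_inl_eq_ker_rightHom, MonoidHom.range_le_ker_iff]
  exact MonoidHom.eq_one_of_forall_not_surjective_int hH _

theorem Subgroup.map_equiv_eq_of_map_le_of_map_symm_le {G : Type*} [Group G] {e : G ≃* G}
    {K : Subgroup G} (he : K.map e.toMonoidHom ≤ K) (he' : K.map e.symm.toMonoidHom ≤ K) :
    K.map e.toMonoidHom = K := by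
  exact le_antisymm he fun x hx => ⟨e.symm x, he' ⟨x, hx, rfl⟩, e.apply_symm_apply x⟩

theorem aut_of_mappingTorus_fixes_base (H : Type*) [Group H]
    (hH : ∀ f : H →* Multiplicative ℤ, ¬ Function.Surjective f)
    (φ : MulAut H) (ψ : MulAut (MappingTorus H φ)) :
    Subgroup.map ψ.toMonoidHom (MappingTorus.ι φ).range = (MappingTorus.ι φ).range := by
  have h : ∀ e : MulAut (MappingTorus H φ),
      (MappingTorus.ι φ).range.map e.toMonoidHom ≤ (MappingTorus.ι φ).range := fun e => by
    rw [← MonoidHom.range_comp]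
    exact SemidirectProduct.range_le_range_inl_of_forall_not_surjective_int hH _
  exact Subgroup.map_equiv_eq_of_map_le_of_map_symm_le (h ψ) (h ψ.symm)
end

section
/- Let H be a group admitting no surjective group homomorphism onto ℤ, let φ be an automorphism of H, and let ψ be any automorphism of the mapping torus H_φ = H ⋊_φ ℤ. Then there exist an automorphism δ of H, an element g ∈ H, and ε ∈ {1, −1} such that ψ(ι(h)) = ι(δ(h)) for all h ∈ H and ψ(t) = ι(g)·t^ε. Moreover, if ε = 1 then δ(φ(h)) = g·φ(δ(h))·g⁻¹ for all h ∈ H (so the class of δ centralizes the class of φ in Out(H)), and if ε = −1 then δ(φ(h)) = g·φ⁻¹(δ(h))·g⁻¹ for all h ∈ H (so the class of δ conjugates the class of φ to its inverse in Out(H)). -/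
/-!
Since `H` maps trivially to `ℤ`, the copy `ι(H)` is the kernel of the projection
`H_φ → ℤ` and of its composite with any automorphism `ψ`, so `ψ` restricts to an
automorphism `δ` of `H`. The projection of `ψ(t)` then generates `ℤ`, hence is `t^{±1}`,
and applying `ψ` to the relation `t ι(h) t⁻¹ = ι(φ h)` gives the twisted commutation rule.
-/

open Function Multiplicative

/-- The range of `f` is a nontrivial subgroup of `ℤ`, hence infinite cyclic, hence `≅ ℤ`. -/
theorem MonoidHom.exists_surjective_of_ne_one {H : Type*} [Group H]
    {f : H →* Multiplicative ℤ} (hf : f ≠ 1) : ∃ g : H →* Multiplicative ℤ, Surjective g := by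
  obtain ⟨y, hy⟩ := (Subgroup.isCyclic_iff_exists_zpowers_eq_top f.range).1 inferInstance
  have hy1 : y ≠ 1 := by
    rintro rfl
    exact hf (f.range_eq_bot_iff.1 (by simpa using hy.symm))
  have hinj : Injective (zpowersHom _ y) :=
    injective_zpow_iff_not_isOfFinOrder.2 ((isOfFinOrder_iff_eq_one y).not.2 hy1)
  let e := (MulEquiv.subgroupCongr hy.symm).trans (MonoidHom.ofInjective hinj).symm
  exact ⟨e.toMonoidHom.comp f.rangeRestrict, e.surjective.comp f.rangeRestrict_surjective⟩

theorem MonoidHom.toAdd_apply_ofAdd_one_eq_one_or_neg_one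
    {f : Multiplicative ℤ →* Multiplicative ℤ} (hf : Surjective f) :
    (f (ofAdd 1)).toAdd = 1 ∨ (f (ofAdd 1)).toAdd = -1 := by
  obtain ⟨n, hn⟩ := hf (ofAdd 1)
  have : n.toAdd * (f (ofAdd 1)).toAdd = 1 := by
    rw [← smul_eq_mul, ← toAdd_zpow, ← map_zpow, ← ofAdd_zsmul, smul_eq_mul, mul_one, ofAdd_toAdd,
      hn, toAdd_ofAdd]
  exact Int.eq_one_or_neg_one_of_mul_eq_one (by rwa [mul_comm])

namespace SemidirectProduct

variable {N G : Type*} [Group N] [Group G] {ϕ : G →* MulAut N}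
  (hN : ∀ f : N →* G, f = 1) (ψ : MulAut (N ⋊[ϕ] G))

include hN

theorem right_map_inl (n : N) : (ψ (inl n)).right = 1 :=
  DFunLike.congr_fun (hN (rightHom.comp (ψ.toMonoidHom.comp inl))) n

theorem inl_left_map_inl (n : N) : inl (ψ (inl n)).left = ψ (inl n) := by
  simpa [right_map_inl hN ψ n] using inl_left_mul_inr_right (ψ (inl n))

def restrictLeft : MulAut N where
  toFun n := (ψ (inl n)).left
  invFun n := (ψ.symm (inl n)).left
  left_inv n := inl_injective <| by
    rw [inl_left_map_inl hN, inl_left_map_inl hN, MulEquiv.symm_apply_apply]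
  right_inv n := inl_injective <| by
    rw [inl_left_map_inl hN, inl_left_map_inl hN, MulEquiv.apply_symm_apply]
  map_mul' a b := inl_injective <| by
    rw [inl_left_map_inl hN, map_mul, map_mul, map_mul, inl_left_map_inl hN, inl_left_map_inl hN]

theorem inl_restrictLeft (n : N) : inl (restrictLeft hN ψ n) = ψ (inl n) :=
  inl_left_map_inl hN ψ n

theorem restrictLeft_apply_aut (g : G) (n : N) :
    restrictLeft hN ψ (ϕ g n) =
      (ψ (inr g)).left * ϕ (ψ (inr g)).right (restrictLeft hN ψ n) * (ψ (inr g)).left⁻¹ :=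
  inl_injective <| by
    rw [inl_restrictLeft, inl_aut, map_mul, map_mul, ← inl_restrictLeft hN ψ n, map_inv inr,
      map_inv ψ]
    generalize ψ (inr g) = x
    conv_lhs => rw [← inl_left_mul_inr_right x]
    generalize x.left = a, x.right = b
    rw [map_mul, map_mul, map_inv, inl_aut]
    simp only [mul_inv_rev, map_inv, mul_assoc]

theorem surjective_rightHom_comp_map_inr :
    Surjective (rightHom.comp (ψ.toMonoidHom.comp inr) : G →* G) := by
  intro y
  obtain ⟨x, hx⟩ := ψ.surjective (inr y)
  refine ⟨x.right, ?_⟩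
  rw [← inl_left_mul_inr_right x, map_mul] at hx
  have := congrArg right hx
  rwa [mul_right, right_map_inl hN ψ, one_mul, right_inr] at this

end SemidirectProduct

open SemidirectProduct

theorem MappingTorus.t_zpow {H : Type*} [Group H] (φ : MulAut H) (n : ℤ) :
    t φ ^ n = inr (ofAdd n) := by
  rw [t, ← map_zpow, ← ofAdd_zsmul, smul_eq_mul, mul_one]

theorem aut_of_mappingTorus_form (H : Type*) [Group H]
    (hH : ∀ f : H →* Multiplicative ℤ, ¬ Function.Surjective f)
    (φ : MulAut H) (ψ : MulAut (MappingTorus H φ)) :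
    ∃ (δ : MulAut H) (g : H) (ε : ℤ), (ε = 1 ∨ ε = -1) ∧
      (∀ h : H, ψ (MappingTorus.ι φ h) = MappingTorus.ι φ (δ h)) ∧
      ψ (MappingTorus.t φ) = MappingTorus.ι φ g * (MappingTorus.t φ) ^ ε ∧
      (ε = 1 → ∀ h : H, δ (φ h) = g * φ (δ h) * g⁻¹) ∧
      (ε = -1 → ∀ h : H, δ (φ h) = g * φ⁻¹ (δ h) * g⁻¹) := by
  have hN (f : H →* Multiplicative ℤ) : f = 1 := by
    by_contra hf
    obtain ⟨g, hg⟩ := MonoidHom.exists_surjective_of_ne_one hf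
    exact hH g hg
  have hconj (h : H) := restrictLeft_apply_aut hN ψ (ofAdd 1) h
  simp only [zpowersHom_apply, toAdd_ofAdd, zpow_one] at hconj
  refine ⟨restrictLeft hN ψ, (ψ (MappingTorus.t φ)).left, (ψ (MappingTorus.t φ)).right.toAdd,
    MonoidHom.toAdd_apply_ofAdd_one_eq_one_or_neg_one (surjective_rightHom_comp_map_inr hN ψ),
    fun h => (inl_restrictLeft hN ψ h).symm, ?_, fun hε => ?_, fun hε => ?_⟩
  · rw [MappingTorus.t_zpow, ofAdd_toAdd, inl_left_mul_inr_right]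
  · simpa only [hε, zpow_one] using hconj
  · simpa only [hε, zpow_neg_one] using hconj
end

section
/- Let H be a group with trivial center and φ an automorphism of H. Suppose δ₁, δ₂ are automorphisms of H and g₁, g₂ ∈ H satisfy δᵢ(φ(h)) = gᵢ·φ(δᵢ(h))·gᵢ⁻¹ for all h ∈ H (i = 1, 2), and suppose δ₂ = δ₁ ∘ γ_k for some k ∈ H, where γ_k is the inner automorphism x ↦ k x k⁻¹ of H. Let αᵢ be the automorphism of H_φ with αᵢ(ι(h)) = ι(δᵢ(h)) for all h ∈ H and αᵢ(t) = ι(gᵢ)·t. Then α₁ and α₂ differ by an inner automorphism of H_φ, i.e. α₂⁻¹ ∘ α₁ is an inner automorphism of H_φ; in particular [α₁] = [α₂] in Out(H_φ). -/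
instance innRangeNormal (G : Type*) [Group G] :
    ((MulAut.conj : G →* MulAut G).range).Normal := by
  constructor
  rintro _ ⟨x, rfl⟩ g
  refine ⟨g x, ?_⟩
  ext h
  simp [MulAut.conj_apply, MulAut.mul_apply, map_mul, map_inv, mul_assoc]

/-- The outer automorphism group: automorphisms modulo inner automorphisms. -/
abbrev Out (G : Type*) [Group G] :=
  MulAut G ⧸ (MulAut.conj : G →* MulAut G).range

/-!
Both `α₁` and `α₂ ∘ γ_{ι(k⁻¹)}` are determined by what they do to `ι(H)` and to `t`.
On `ι(H)` both act as `δ₁`, since `δ₂ ∘ γ_{k⁻¹} = δ₁`. On `t` they agree once we know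
`δ₁(k) g₁ = g₂ φ(δ₁(k))`: the two twisting relations show that both sides induce the
same inner automorphism of `H`, and `H` is centreless.
-/

namespace MulAut

variable {G : Type*} [Group G]

theorem mul_conj (f : MulAut G) (g : G) : f * conj g = conj (f g) * f := by
  ext x
  simp

theorem ker_conj : (conj : G →* MulAut G).ker = Subgroup.center G := by
  ext x
  simp only [MonoidHom.mem_ker, Subgroup.mem_center_iff, MulEquiv.ext_iff, conj_apply,
    one_apply, mul_inv_eq_iff_eq_mul]
  exact forall_congr' fun _ => eq_comm

theorem conj_injective_of_center_eq_bot (hG : Subgroup.center G = ⊥) :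
    Function.Injective (conj : G →* MulAut G) :=
  (MonoidHom.ker_eq_bot_iff _).1 (ker_conj.trans hG)

theorem mul_eq_mul_apply_of_twisted (hG : Subgroup.center G = ⊥) {φ δ : MulAut G}
    {g₁ g₂ k : G} (h₁ : δ * φ = conj g₁ * φ * δ)
    (h₂ : δ * conj k * φ = conj g₂ * φ * (δ * conj k)) :
    δ k * g₁ = g₂ * φ (δ k) := by
  apply conj_injective_of_center_eq_bot hG
  apply mul_right_cancel (b := φ * δ)
  calc conj (δ k * g₁) * (φ * δ) = conj (δ k) * (δ * φ) := by
        rw [h₁, map_mul]; group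
    _ = conj g₂ * φ * (δ * conj k) := by rw [← h₂, mul_conj]; group
    _ = conj (g₂ * φ (δ k)) * (φ * δ) := by
        rw [mul_conj, map_mul, ← mul_assoc, mul_assoc (conj g₂), mul_conj]; group

end MulAut

namespace MappingTorus

variable {H : Type*} [Group H] {φ : MulAut H}

theorem t_mul_ι_mul_t_inv (h : H) : t φ * ι φ h * (t φ)⁻¹ = ι φ (φ h) := by
  simpa using (SemidirectProduct.inl_aut (φ := zpowersHom (MulAut H) φ)
    (Multiplicative.ofAdd 1) h).symm

theorem conj_ι_t (x : H) : MulAut.conj (ι φ x) (t φ) = ι φ (x * φ x⁻¹) * t φ := by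
  rw [MulAut.conj_apply, map_mul, ← t_mul_ι_mul_t_inv, map_inv]
  group

theorem mulAut_ext {α β : MulAut (MappingTorus H φ)} (hι : ∀ h, α (ι φ h) = β (ι φ h))
    (ht : α (t φ) = β (t φ)) : α = β := by
  refine MulEquiv.toMonoidHom_injective (SemidirectProduct.hom_ext ?_ ?_)
  · exact MonoidHom.ext hι
  · exact MonoidHom.ext_mint ht

variable (φ) in
def IsInducedBy (α : MulAut (MappingTorus H φ)) (δ : MulAut H) (g : H) : Prop :=
  (∀ h : H, α (ι φ h) = ι φ (δ h)) ∧ α (t φ) = ι φ g * t φ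

namespace IsInducedBy

variable {α β : MulAut (MappingTorus H φ)} {δ : MulAut H} {g : H}

theorem unique (hα : IsInducedBy φ α δ g) (hβ : IsInducedBy φ β δ g) : α = β :=
  mulAut_ext (fun h => (hα.1 h).trans (hβ.1 h).symm) (hα.2.trans hβ.2.symm)

theorem mul_conj_ι (hα : IsInducedBy φ α δ g) (x : H) :
    IsInducedBy φ (α * MulAut.conj (ι φ x)) (δ * MulAut.conj x) (δ (x * φ x⁻¹) * g) := by
  constructor
  · intro h
    simp only [MulAut.mul_apply, MulAut.conj_apply, ← map_inv, ← map_mul, hα.1]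
  · rw [MulAut.mul_apply, conj_ι_t, map_mul, hα.1, hα.2]
    simp only [map_mul, mul_assoc]

end IsInducedBy

end MappingTorus

open MappingTorus in
theorem alpha_well_defined_up_to_inner (H : Type*) [Group H]
    (hZ : Subgroup.center H = ⊥)
    (φ δ₁ δ₂ : MulAut H) (g₁ g₂ k : H)
    (h₁ : ∀ h : H, δ₁ (φ h) = g₁ * φ (δ₁ h) * g₁⁻¹)
    (h₂ : ∀ h : H, δ₂ (φ h) = g₂ * φ (δ₂ h) * g₂⁻¹)
    (hδ : δ₂ = δ₁ * MulAut.conj k)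
    (α₁ α₂ : MulAut (MappingTorus H φ))
    (hα₁ : (∀ h : H, α₁ (MappingTorus.ι φ h) = MappingTorus.ι φ (δ₁ h)) ∧
      α₁ (MappingTorus.t φ) = MappingTorus.ι φ g₁ * MappingTorus.t φ)
    (hα₂ : (∀ h : H, α₂ (MappingTorus.ι φ h) = MappingTorus.ι φ (δ₂ h)) ∧
      α₂ (MappingTorus.t φ) = MappingTorus.ι φ g₂ * MappingTorus.t φ) :
    (∃ x : MappingTorus H φ, α₂⁻¹ * α₁ = MulAut.conj x) ∧
    (QuotientGroup.mk α₁ : Out (MappingTorus H φ)) = QuotientGroup.mk α₂ := by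
  subst hδ
  have hg : δ₁ k * g₁ = g₂ * φ (δ₁ k) :=
    MulAut.mul_eq_mul_apply_of_twisted hZ (MulEquiv.ext h₁) (MulEquiv.ext h₂)
  have hα : α₁ = α₂ * MulAut.conj (ι φ k⁻¹) := by
    refine IsInducedBy.unique (δ := δ₁) (g := g₁) hα₁ ?_
    convert IsInducedBy.mul_conj_ι hα₂ k⁻¹ using 1
    · rw [mul_assoc, ← map_mul, mul_inv_cancel, map_one, mul_one]
    · rw [eq_mul_inv_of_mul_eq hg.symm]
      simp only [MulAut.mul_apply, MulAut.conj_apply, map_mul, map_inv, inv_inv, h₁]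
      group
  refine ⟨⟨ι φ k⁻¹, by rw [hα, inv_mul_cancel_left]⟩, QuotientGroup.eq.2 ⟨ι φ k, ?_⟩⟩
  rw [hα, mul_inv_rev, inv_mul_cancel_right, ← map_inv, ← map_inv, inv_inv]
end

section
/- Let H be a group with trivial center and admitting no surjective group homomorphism onto ℤ, let φ, δ be automorphisms of H, and let g ∈ H satisfy δ(φ(h)) = g·φ(δ(h))·g⁻¹ for all h ∈ H. Let α_δ be the automorphism of H_φ with α_δ(ι(h)) = ι(δ(h)) for all h ∈ H and α_δ(t) = ι(g)·t. If α_δ is an inner automorphism of H_φ, then [δ] lies in the cyclic subgroup of Out(H) generated by [φ]; that is, there exist j ∈ ℤ and k ∈ H such that δ(h) = k·φ^j(h)·k⁻¹ for all h ∈ H. -/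
namespace SemidirectProduct

variable {N G : Type*} [Group N] [Group G] {ψ : G →* MulAut N}

theorem conj_inl (x : N ⋊[ψ] G) (n : N) :
    MulAut.conj x (inl n) = inl (x.left * ψ x.right n * x.left⁻¹) := by
  ext <;> simp [mul_assoc]

end SemidirectProduct

theorem MappingTorus.conj_ι {H : Type*} [Group H] (φ : MulAut H) (x : MappingTorus H φ)
    (h : H) :
    MulAut.conj x (MappingTorus.ι φ h) =
      MappingTorus.ι φ (x.left * (φ ^ Multiplicative.toAdd x.right) h * x.left⁻¹) := by
  rw [SemidirectProduct.conj_inl, zpowersHom_apply]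

theorem delta_in_zpowers_phi_of_alpha_inner_general (H : Type*) [Group H]
    (φ δ : MulAut H)
    (α : MulAut (MappingTorus H φ))
    (hα₁ : ∀ h : H, α (MappingTorus.ι φ h) = MappingTorus.ι φ (δ h))
    (hinner : ∃ x : MappingTorus H φ, α = MulAut.conj x) :
    ∃ (j : ℤ) (k : H), ∀ h : H, δ h = k * (φ ^ j) h * k⁻¹ := by
  obtain ⟨x, rfl⟩ := hinner
  refine ⟨Multiplicative.toAdd x.right, x.left, fun h => ?_⟩
  have hconj := hα₁ h
  rw [MappingTorus.conj_ι, SemidirectProduct.inl_inj] at hconj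
  exact hconj.symm

theorem delta_in_zpowers_phi_of_alpha_inner (H : Type*) [Group H]
    (hZ : Subgroup.center H = ⊥)
    (hH : ∀ f : H →* Multiplicative ℤ, ¬ Function.Surjective f)
    (φ δ : MulAut H) (g : H)
    (hg : ∀ h : H, δ (φ h) = g * φ (δ h) * g⁻¹)
    (α : MulAut (MappingTorus H φ))
    (hα₁ : ∀ h : H, α (MappingTorus.ι φ h) = MappingTorus.ι φ (δ h))
    (hα₂ : α (MappingTorus.t φ) = MappingTorus.ι φ g * MappingTorus.t φ)
    (hinner : ∃ x : MappingTorus H φ, α = MulAut.conj x) :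
    ∃ (j : ℤ) (k : H), ∀ h : H, δ h = k * (φ ^ j) h * k⁻¹ :=
  delta_in_zpowers_phi_of_alpha_inner_general H φ δ α hα₁ hinner
end
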